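/- If ρ ∈ (0,1), then G attains its global minimum over ℝ at y*, i.e. G(y) ≥ G(y*) for all y ∈ ℝ; moreover G(y*) ≤ 0. -/

import Mathlib

/-!
Writing `Φ(x)Φ(y) = ∫_{-∞}^y Φ(x) φ(u) du`, the function `G` becomes
`G(y) = ∫_{-∞}^y (Φ(x) − Φ((x − ρu)/√(1−ρ²))) φ(u) du`. For `ρ > 0` the argument
`(x − ρu)/√(1−ρ²)` decreases in `u` and equals `x` exactly at `u = y*`, so the integrand is
`≤ 0` left of `y*` and `≥ 0` right of it. Hence `G` decreases up to `y*` and increases after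
it, and `G(y*)`, the integral of a nonpositive function, is `≤ 0`.
-/

open MeasureTheory Real

/-- The standard normal density `φ(u) = (2π)^{-1/2} exp(-u²/2)`. -/
noncomputable def stdNormalPDF (u : ℝ) : ℝ := (Real.sqrt (2 * π))⁻¹ * Real.exp (-u ^ 2 / 2)

/-- The standard normal CDF `Φ(x) = ∫_{-∞}^x φ(u) du`. -/
noncomputable def stdNormalCDF (x : ℝ) : ℝ := ∫ u in Set.Iic x, stdNormalPDF u

/-- `G(y) = Φ(x)Φ(y) − ∫_{−∞}^{y} Φ((x − ρu)/√(1−ρ²)) φ(u) du`. -/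
noncomputable def Gfun (ρ x y : ℝ) : ℝ :=
  stdNormalCDF x * stdNormalCDF y
    - ∫ u in Set.Iic y, stdNormalCDF ((x - ρ * u) / Real.sqrt (1 - ρ ^ 2)) * stdNormalPDF u

/-- `y* = x(1 − √(1−ρ²))/ρ`. -/
noncomputable def ystar (ρ x : ℝ) : ℝ := x * (1 - Real.sqrt (1 - ρ ^ 2)) / ρ

open Set

theorem setIntegral_Iic_le_of_sign_change {f : ℝ → ℝ} {μ : Measure ℝ} {a : ℝ}
    (hf : ∀ y, IntegrableOn f (Iic y) μ) (hneg : ∀ u ≤ a, f u ≤ 0)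
    (hpos : ∀ u, a ≤ u → 0 ≤ f u) (y : ℝ) :
    ∫ u in Iic a, f u ∂μ ≤ ∫ u in Iic y, f u ∂μ := by
  rw [← sub_nonneg, intervalIntegral.integral_Iic_sub_Iic (hf a) (hf y)]
  rcases le_total a y with hay | hya
  · rw [intervalIntegral.integral_of_le hay]
    exact setIntegral_nonneg measurableSet_Ioc fun u hu => hpos u hu.1.le
  · rw [intervalIntegral.integral_of_ge hya, neg_nonneg]
    exact setIntegral_nonpos measurableSet_Ioc fun u hu => hneg u hu.2

theorem stdNormalPDF_eq_gaussianPDFReal :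
    stdNormalPDF = ProbabilityTheory.gaussianPDFReal 0 1 := by
  ext u
  simp [stdNormalPDF, ProbabilityTheory.gaussianPDFReal]

theorem stdNormalPDF_nonneg (u : ℝ) : 0 ≤ stdNormalPDF u := by
  rw [stdNormalPDF_eq_gaussianPDFReal]
  exact ProbabilityTheory.gaussianPDFReal_nonneg _ _ _

theorem integrable_stdNormalPDF : Integrable stdNormalPDF := by
  rw [stdNormalPDF_eq_gaussianPDFReal]
  exact ProbabilityTheory.integrable_gaussianPDFReal _ _

theorem integral_stdNormalPDF : ∫ u, stdNormalPDF u = 1 := by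
  rw [stdNormalPDF_eq_gaussianPDFReal]
  exact ProbabilityTheory.integral_gaussianPDFReal_eq_one _ one_ne_zero

theorem stdNormalCDF_nonneg (t : ℝ) : 0 ≤ stdNormalCDF t :=
  setIntegral_nonneg measurableSet_Iic fun u _ => stdNormalPDF_nonneg u

theorem stdNormalCDF_le_one (t : ℝ) : stdNormalCDF t ≤ 1 :=
  integral_stdNormalPDF ▸
    setIntegral_le_integral integrable_stdNormalPDF (ae_of_all _ stdNormalPDF_nonneg)

theorem monotone_stdNormalCDF : Monotone stdNormalCDF := fun _ _ hst =>
  setIntegral_mono_set integrable_stdNormalPDF.integrableOn (ae_of_all _ stdNormalPDF_nonneg)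
    (Iic_subset_Iic.2 hst).eventuallyLE

theorem integrable_stdNormalCDF_comp_mul_stdNormalPDF {g : ℝ → ℝ} (hg : Measurable g) :
    Integrable (fun u => stdNormalCDF (g u) * stdNormalPDF u) :=
  integrable_stdNormalPDF.bdd_mul (monotone_stdNormalCDF.measurable.comp hg).aestronglyMeasurable
    (ae_of_all _ fun u => by
      rw [Real.norm_of_nonneg (stdNormalCDF_nonneg _)]
      exact stdNormalCDF_le_one _)

noncomputable def Gintegrand (ρ x u : ℝ) : ℝ :=
  (stdNormalCDF x - stdNormalCDF ((x - ρ * u) / √(1 - ρ ^ 2))) * stdNormalPDF u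

theorem integrable_Gintegrand (ρ x : ℝ) : Integrable (Gintegrand ρ x) := by
  have hΦ := integrable_stdNormalCDF_comp_mul_stdNormalPDF
    (g := fun u => (x - ρ * u) / √(1 - ρ ^ 2)) (by fun_prop)
  have hsplit : Gintegrand ρ x = fun u => stdNormalCDF x * stdNormalPDF u
      - stdNormalCDF ((x - ρ * u) / √(1 - ρ ^ 2)) * stdNormalPDF u :=
    funext fun _ => sub_mul _ _ _
  rw [hsplit]
  exact (integrable_stdNormalPDF.const_mul _).sub hΦ

theorem Gfun_eq_setIntegral_Gintegrand (ρ x y : ℝ) :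
    Gfun ρ x y = ∫ u in Iic y, Gintegrand ρ x u := by
  have hΦ := integrable_stdNormalCDF_comp_mul_stdNormalPDF
    (g := fun u => (x - ρ * u) / √(1 - ρ ^ 2)) (by fun_prop)
  have hprod : stdNormalCDF x * stdNormalCDF y = ∫ u in Iic y, stdNormalCDF x * stdNormalPDF u :=
    (integral_const_mul _ _).symm
  rw [Gfun, hprod,
    ← integral_sub (integrable_stdNormalPDF.const_mul _).integrableOn hΦ.integrableOn]
  simp only [Gintegrand, sub_mul]

section SignOfGintegrand

variable {ρ x u : ℝ}

theorem sub_mul_ystar_div_sqrt (h0 : ρ ≠ 0) (h1 : ρ ^ 2 < 1) :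
    (x - ρ * ystar ρ x) / √(1 - ρ ^ 2) = x := by
  have hc : √(1 - ρ ^ 2) ≠ 0 := (Real.sqrt_pos.2 (by linarith)).ne'
  rw [ystar]
  field_simp
  ring

theorem Gintegrand_nonpos_of_le_ystar (h0 : 0 < ρ) (h1 : ρ < 1) (hu : u ≤ ystar ρ x) :
    Gintegrand ρ x u ≤ 0 := by
  refine mul_nonpos_of_nonpos_of_nonneg (sub_nonpos.2 (monotone_stdNormalCDF ?_))
    (stdNormalPDF_nonneg u)
  calc x = (x - ρ * ystar ρ x) / √(1 - ρ ^ 2) :=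
        (sub_mul_ystar_div_sqrt h0.ne' (by nlinarith)).symm
    _ ≤ (x - ρ * u) / √(1 - ρ ^ 2) := by gcongr

theorem Gintegrand_nonneg_of_ystar_le (h0 : 0 < ρ) (h1 : ρ < 1) (hu : ystar ρ x ≤ u) :
    0 ≤ Gintegrand ρ x u := by
  refine mul_nonneg (sub_nonneg.2 (monotone_stdNormalCDF ?_)) (stdNormalPDF_nonneg u)
  calc (x - ρ * u) / √(1 - ρ ^ 2) ≤ (x - ρ * ystar ρ x) / √(1 - ρ ^ 2) := by gcongr
    _ = x := sub_mul_ystar_div_sqrt h0.ne' (by nlinarith)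

end SignOfGintegrand

/-- If `ρ ∈ (0,1)` then `G` attains its global minimum over `ℝ` at
`y*`, i.e. `G(y) ≥ G(y*)` for all `y`; moreover `G(y*) ≤ 0`. -/
theorem stmt6 (ρ x : ℝ) (hρ : ρ ∈ Set.Ioo (0 : ℝ) 1) :
    (∀ y : ℝ, Gfun ρ x (ystar ρ x) ≤ Gfun ρ x y) ∧ Gfun ρ x (ystar ρ x) ≤ 0 := by
  obtain ⟨h0, h1⟩ := hρ
  simp only [Gfun_eq_setIntegral_Gintegrand]
  exact ⟨setIntegral_Iic_le_of_sign_change (fun _ => (integrable_Gintegrand ρ x).integrableOn)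
      (fun _ => Gintegrand_nonpos_of_le_ystar h0 h1) (fun _ => Gintegrand_nonneg_of_ystar_le h0 h1),
    setIntegral_nonpos measurableSet_Iic fun _ => Gintegrand_nonpos_of_le_ystar h0 h1⟩
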